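/- arXiv:0801.0080 — 5 statements merged into one kernel-verified Lean document; each statement's English description precedes it below -/
import Mathlib

section
/- Let n ≥ 1, k ∈ {1,…,n}, and q₁,…,qₙ ∈ ℕ with N = q₁ + ⋯ + qₙ. Then the coefficient of the monomial ∏_{j=1}^n x_j^{k·q_j + j − 1} in the polynomial (x₁^k + ⋯ + xₙ^k)^N · ∏_{1 ≤ i < j ≤ n} (x_j − x_i) (with integer coefficients) equals N! · ∏_{s=1}^k [ ∏_{0 ≤ i < j ≤ ⌊(n−s)/k⌋} ((q_{jk+s} + j) − (q_{ik+s} + i)) / ∏_{j=0}^{⌊(n−s)/k⌋} (q_{jk+s} + j)! ]. -/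
/-!
Write the Vandermonde product as the alternant `∑_σ sign σ · x^σ`. Since `(∑ x_j^k)^N / N!` is the
degree-`kN` part of `∏_j exp (x_j^k)`, the coefficient of `x^(e - σ)` in it is
`∏_j c (e_j - σ_j)` with `c d` the coefficient of `x^d` in `exp (x^k)`; hence the wanted coefficient
is `N! · det [c (e_j - t)]_{t,j}`. As `e_j ≡ j (mod k)`, this matrix is block diagonal along the
residue classes modulo `k`, and the block of the class of `s` is `[1 / (a_j - i)!]` with
`a_j = q_{jk+s} + j`. Scaling column `j` by `a_j!` turns it into the matrix of descending
factorials `a_j (a_j - 1) ⋯ (a_j - i + 1)`, i.e. of monic polynomials of degree `i` evaluated at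
`a_j`, whose determinant is the Vandermonde determinant `∏_{i<j} (a_j - a_i)`.
-/

open MvPolynomial Finset

open Matrix (vandermonde det_vandermonde)

/-- The coefficient of `x ^ d` in `exp (x ^ k)`. -/
def expPowCoeff (K : Type*) [Field K] (k d : ℕ) : K :=
  if k ∣ d then ((d / k).factorial : K)⁻¹ else 0

variable {K : Type*} [Field K]

theorem expPowCoeff_mul {k : ℕ} (hk : k ≠ 0) (m : ℕ) :
    expPowCoeff K k (k * m) = ((m.factorial : K))⁻¹ := by
  simp [expPowCoeff, Nat.mul_div_cancel_left m (Nat.pos_of_ne_zero hk)]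

theorem coeff_sum_X_pow_pow [CharZero K] {σ : Type*} [Fintype σ] {k : ℕ} (hk : k ≠ 0) (N : ℕ)
    (d : σ →₀ ℕ) (hd : ∑ i, d i = k * N) :
    ((coeff d ((∑ i, X i ^ k : MvPolynomial σ ℤ) ^ N) : ℤ) : K) =
      N.factorial * ∏ i, expPowCoeff K k (d i) := by
  have hexpand : (∑ i, X i ^ k : MvPolynomial σ ℤ) ^ N = expand k ((∑ i, X i) ^ N) := by simp
  rw [hexpand]
  by_cases hdvd : ∀ i, k ∣ d i
  · set m : σ →₀ ℕ := Finsupp.equivFunOnFinite.symm fun i => d i / k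
    have hdm : d = k • m := by ext i; simp [m, Nat.mul_div_cancel' (hdvd i)]
    have hm : ∑ i, m i = N := by
      apply Nat.eq_of_mul_eq_mul_left (Nat.pos_of_ne_zero hk)
      rw [mul_sum, ← hd, hdm]
      simp
    have hspec := Nat.multinomial_spec univ m
    rw [Finsupp.multinomial_of_support_subset (subset_univ _), hm] at hspec
    rw [hdm, coeff_expand_smul _ hk, coeff_sum_X_pow_of_fintype, Finsupp.sum_fintype _ _ (by simp),
      if_pos hm]
    simp only [Finsupp.smul_apply, smul_eq_mul, expPowCoeff_mul hk, prod_inv_distrib, ← hspec]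
    have hne : ∏ i, ((m i).factorial : K) ≠ 0 := prod_ne_zero_iff.2 fun i _ =>
      Nat.cast_ne_zero.2 (Nat.factorial_ne_zero _)
    push_cast
    field_simp
  · obtain ⟨i, hi⟩ := not_forall.1 hdvd
    rw [coeff_expand_of_not_dvd _ hi, prod_eq_zero (mem_univ i) (if_neg hi)]
    simp

theorem det_vandermonde_X_eq_sum_monomial (R : Type*) [CommRing R] (n : ℕ) :
    (vandermonde (X : Fin n → MvPolynomial (Fin n) R)).det =
      ∑ σ : Equiv.Perm (Fin n), Equiv.Perm.sign σ •
        monomial (Finsupp.equivFunOnFinite.symm fun i => (σ i : ℕ)) (1 : R) := by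
  rw [← Matrix.det_transpose, Matrix.det_apply]
  refine sum_congr rfl fun σ _ => ?_
  simp [monomial_eq, Finsupp.prod_fintype]

def expPowMatrix (K : Type*) [Field K] {n : ℕ} (k : ℕ) (e : Fin n → ℕ) :
    Matrix (Fin n) (Fin n) K :=
  Matrix.of fun t j => if (t : ℕ) ≤ e j then expPowCoeff K k (e j - t) else 0

theorem coeff_sum_X_pow_pow_mul_det_vandermonde [CharZero K] {n k : ℕ} (hk : k ≠ 0) (N : ℕ)
    (e : Fin n →₀ ℕ) (he : ∑ j, e j = k * N + ∑ j : Fin n, (j : ℕ)) :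
    ((coeff e ((∑ j, X j ^ k : MvPolynomial (Fin n) ℤ) ^ N * (vandermonde X).det) : ℤ) : K) =
      N.factorial * (expPowMatrix K k e).det := by
  rw [det_vandermonde_X_eq_sum_monomial, mul_sum, coeff_sum, Matrix.det_apply, mul_sum]
  push_cast
  refine sum_congr rfl fun σ _ => ?_
  set τ : Fin n →₀ ℕ := Finsupp.equivFunOnFinite.symm fun i => (σ i : ℕ)
  rw [mul_smul_comm, coeff_smul, coeff_mul_monomial', Units.smul_def, Units.smul_def, zsmul_eq_mul,
    zsmul_eq_mul, mul_left_comm]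
  push_cast
  congr 1
  by_cases hτ : τ ≤ e
  · have hdeg : ∑ i, (e - τ) i = k * N := by
      have hσ : ∑ i, τ i = ∑ j : Fin n, (j : ℕ) := Equiv.sum_comp σ (fun j : Fin n => (j : ℕ))
      have hsplit : ∑ i, (e - τ) i + ∑ i, τ i = ∑ i, e i := by
        rw [← sum_add_distrib]
        exact sum_congr rfl fun i _ => tsub_add_cancel_of_le (hτ i)
      omega
    rw [if_pos hτ, mul_one, coeff_sum_X_pow_pow hk N _ hdeg]
    congr 1
    refine prod_congr rfl fun i _ => ?_
    have hi : (σ i : ℕ) ≤ e i := hτ i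
    simp [expPowMatrix, hi, τ]
  · obtain ⟨i, hi⟩ := not_forall.1 hτ
    have hi : ¬(σ i : ℕ) ≤ e i := hi
    rw [if_neg hτ, prod_eq_zero (mem_univ i) (by simp [expPowMatrix, hi]), mul_zero]

@[to_additive sum_Icc_one_eq_sum_fin]
theorem prod_Icc_one_eq_prod_fin {M : Type*} [CommMonoid M] (f : ℕ → M) (n : ℕ) :
    ∏ i ∈ Icc 1 n, f i = ∏ i : Fin n, f (i + 1) := by
  rw [Fin.prod_univ_eq_prod_range (fun i => f (i + 1)), ← Ico_add_one_right_eq_Icc,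
    prod_Ico_eq_prod_range]
  simp [add_comm]

theorem prod_fin_prod_Ioi_eq_prod_range {M : Type*} [CommMonoid M] (m : ℕ) (f : ℕ → ℕ → M) :
    ∏ i : Fin m, ∏ j ∈ Ioi i, f i j = ∏ j ∈ range m, ∏ i ∈ range j, f i j := by
  rw [prod_comm' (t' := univ) (s' := Iio) (by simp), ← Fin.prod_univ_eq_prod_range]
  refine prod_congr rfl fun j _ => ?_
  rw [← Nat.Iio_eq_range, ← Fin.map_valEmbedding_Iio, prod_map]
  rfl

theorem det_of_inv_factorial_sub [CharZero K] (m : ℕ) (a : ℕ → ℕ) :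
    (Matrix.of fun i j : Fin m => if (i : ℕ) ≤ a j then ((a j - i).factorial : K)⁻¹ else 0).det =
      (∏ j ∈ range m, ∏ i ∈ range j, ((a j : K) - a i)) / ∏ j ∈ range m, ((a j).factorial : K) := by
  rw [← prod_fin_prod_Ioi_eq_prod_range m fun i j => (a j : K) - a i,
    ← Fin.prod_univ_eq_prod_range fun j => ((a j).factorial : K)]
  have hfact : ∏ j : Fin m, ((a j).factorial : K) ≠ 0 :=
    prod_ne_zero_iff.2 fun j _ => Nat.cast_ne_zero.2 (Nat.factorial_ne_zero _)
  have hentry (i j : Fin m) : ((a j).factorial : K) *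
      (if (i : ℕ) ≤ a j then ((a j - i).factorial : K)⁻¹ else 0) =
        (descPochhammer K i).eval (a j : K) := by
    rw [descPochhammer_eval_eq_descFactorial]
    split_ifs with h
    · have hne : ((a j - i).factorial : K) ≠ 0 := Nat.cast_ne_zero.2 (Nat.factorial_ne_zero _)
      rw [← Nat.factorial_mul_descFactorial h]
      push_cast
      field_simp
    · rw [Nat.descFactorial_eq_zero_iff_lt.2 (not_le.1 h)]
      simp
  rw [eq_div_iff hfact, mul_comm, ← Matrix.det_mul_row]
  simp only [Matrix.of_apply, hentry]
  rw [← Matrix.det_transpose, ← det_vandermonde]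
  exact (Matrix.det_eval_matrixOfPolynomials_eq_det_vandermonde _ _
    (fun i => descPochhammer_natDegree K i) (fun i => monic_descPochhammer K i)).symm

theorem mul_add_lt_iff_lt_div_add_one {n k s i : ℕ} (hk : 0 < k) (hsn : s < n) :
    i * k + s < n ↔ i < (n - (s + 1)) / k + 1 := by
  rw [Nat.lt_succ_iff, Nat.le_div_iff_mul_le hk]
  omega

def residueClassEquiv {n k : ℕ} (hkn : k ≤ n) (s : Fin k) :
    Fin ((n - (s + 1)) / k + 1) ≃ {t : Fin n // (t : ℕ) % k = s} where
  toFun i := ⟨⟨i * k + s, (mul_add_lt_iff_lt_div_add_one s.pos (s.2.trans_le hkn)).2 i.2⟩,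
    Nat.mul_add_mod_of_lt s.2⟩
  invFun t := ⟨t.1 / k, (mul_add_lt_iff_lt_div_add_one s.pos (s.2.trans_le hkn)).1 <| by
    have := Nat.div_add_mod' t.1 k
    rw [t.2] at this
    omega⟩
  left_inv i := by
    ext
    simp only
    rw [add_comm, Nat.add_mul_div_right _ _ s.pos, Nat.div_eq_of_lt s.2, zero_add]
  right_inv t := by
    ext
    have := Nat.div_add_mod' t.1 k
    rw [t.2] at this
    exact this

theorem Matrix.det_eq_prod_det_residueClass {R : Type*} [CommRing R] {n k : ℕ} (hk : 0 < k)
    (hkn : k ≤ n) (M : Matrix (Fin n) (Fin n) R)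
    (hM : ∀ t j : Fin n, (t : ℕ) % k ≠ j % k → M t j = 0) :
    M.det = ∏ s : Fin k,
      (M.submatrix (fun i => (residueClassEquiv hkn s i).1)
        (fun i => (residueClassEquiv hkn s i).1)).det := by
  let b : Fin n → Fin k := fun t => ⟨t % k, Nat.mod_lt _ hk⟩
  have hb : M.BlockTriangular b := fun t j hlt => hM t j fun h => hlt.ne (Fin.ext h.symm)
  rw [hb.det_fintype]
  refine prod_congr rfl fun s _ => ?_
  have hclass (t : Fin n) : (t : ℕ) % k = s ↔ b t = s := (@Fin.ext_iff _ (b t) s).symm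
  rw [← Matrix.det_submatrix_equiv_self
    ((residueClassEquiv hkn s).trans (Equiv.subtypeEquivRight hclass))]
  rfl

theorem expPowMatrix_eq_zero_of_mod_ne {n k : ℕ} (e : Fin n → ℕ) {t j : Fin n}
    (h : (t : ℕ) % k ≠ e j % k) : expPowMatrix K k e t j = 0 := by
  simp only [expPowMatrix, Matrix.of_apply, expPowCoeff]
  split_ifs with hle hdvd
  · exact absurd ((Nat.modEq_iff_dvd' hle).2 hdvd) h
  all_goals rfl

theorem expPowMatrix_submatrix_residueClass {n k : ℕ} (hkn : k ≤ n) (q : ℕ → ℕ) (s : Fin k) :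
    (expPowMatrix K k fun j : Fin n => k * q (j + 1) + j).submatrix
        (fun i => (residueClassEquiv hkn s i).1) (fun i => (residueClassEquiv hkn s i).1) =
      Matrix.of fun i j : Fin ((n - (s + 1)) / k + 1) =>
        if (i : ℕ) ≤ q (j * k + s + 1) + j then
          ((q (j * k + s + 1) + j - i).factorial : K)⁻¹ else 0 := by
  ext i j
  simp only [Matrix.submatrix_apply, expPowMatrix, Matrix.of_apply, residueClassEquiv,
    Equiv.coe_fn_mk]
  rw [show k * q (j * k + s + 1) + (j * k + s) = (q (j * k + s + 1) + j) * k + s by ring]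
  generalize q (j * k + s + 1) + (j : ℕ) = a
  simp only [Nat.add_le_add_iff_right, Nat.mul_le_mul_right_iff s.pos, Nat.add_sub_add_right,
    ← Nat.sub_mul]
  rw [Nat.mul_comm _ k, expPowCoeff_mul s.pos.ne']

theorem stmt_1_general (n k : ℕ) (hk1 : 1 ≤ k) (hkn : k ≤ n)
    (q : ℕ → ℕ) (N : ℕ) (hN : N = ∑ i ∈ Finset.Icc 1 n, q i) :
    ((MvPolynomial.coeff
        (Finsupp.equivFunOnFinite.symm fun j : Fin n => k * q (j.1 + 1) + j.1)
        (((∑ j : Fin n, (X j : MvPolynomial (Fin n) ℤ) ^ k) ^ N) *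
          ∏ j : Fin n, ∏ i ∈ Finset.univ.filter (· < j), (X j - X i)) : ℤ) : ℚ) =
      (N.factorial : ℚ) *
        ∏ s ∈ Finset.Icc 1 k,
          ((∏ j ∈ Finset.range ((n - s) / k + 1), ∏ i ∈ Finset.range j,
              (((q (j * k + s) + j : ℕ) : ℚ) - ((q (i * k + s) + i : ℕ) : ℚ))) /
            ∏ j ∈ Finset.range ((n - s) / k + 1),
              ((q (j * k + s) + j).factorial : ℚ)) := by
  set e : Fin n → ℕ := fun j => k * q (j + 1) + j
  have hV : ∏ j : Fin n, ∏ i ∈ univ.filter (· < j), (X j - X i : MvPolynomial (Fin n) ℤ) =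
      (vandermonde X).det := by
    rw [det_vandermonde]
    exact prod_comm' (by simp)
  have he : ∑ j, Finsupp.equivFunOnFinite.symm e j = k * N + ∑ j : Fin n, (j : ℕ) := by
    simp [e, sum_add_distrib, ← mul_sum, hN, sum_Icc_one_eq_sum_fin]
  have hblocks (t j : Fin n) (h : (t : ℕ) % k ≠ j % k) : expPowMatrix ℚ k e t j = 0 :=
    expPowMatrix_eq_zero_of_mod_ne e (by rwa [Nat.mul_add_mod_self_left])
  rw [hV, coeff_sum_X_pow_pow_mul_det_vandermonde (by omega) N _ he,
    Finsupp.coe_equivFunOnFinite_symm, Matrix.det_eq_prod_det_residueClass hk1 hkn _ hblocks,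
    prod_Icc_one_eq_prod_fin]
  congr 1
  refine prod_congr rfl fun s _ => ?_
  rw [expPowMatrix_submatrix_residueClass]
  exact det_of_inv_factorial_sub _ fun j => q (j * k + s + 1) + j

theorem stmt_1 (n k : ℕ) (hn : 1 ≤ n) (hk1 : 1 ≤ k) (hkn : k ≤ n)
    (q : ℕ → ℕ) (N : ℕ) (hN : N = ∑ i ∈ Finset.Icc 1 n, q i) :
    ((MvPolynomial.coeff
        (Finsupp.equivFunOnFinite.symm fun j : Fin n => k * q (j.1 + 1) + j.1)
        (((∑ j : Fin n, (X j : MvPolynomial (Fin n) ℤ) ^ k) ^ N) *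
          ∏ j : Fin n, ∏ i ∈ Finset.univ.filter (· < j), (X j - X i)) : ℤ) : ℚ) =
      (N.factorial : ℚ) *
        ∏ s ∈ Finset.Icc 1 k,
          ((∏ j ∈ Finset.range ((n - s) / k + 1), ∏ i ∈ Finset.range j,
              (((q (j * k + s) + j : ℕ) : ℚ) - ((q (i * k + s) + i : ℕ) : ℚ))) /
            ∏ j ∈ Finset.range ((n - s) / k + 1),
              ((q (j * k + s) + j).factorial : ℚ)) :=
  stmt_1_general n k hk1 hkn q N hN
end

section
/- Let p be a prime and A ⊆ ℤ/pℤ. Then |{ x₁ + x₂ : x₁, x₂ ∈ A, x₁ ≠ x₂ }| ≥ min{ p, 2|A| − 3 }. -/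
open Polynomial Finset

variable {F : Type*} [Field F] [DecidableEq F]

noncomputable def ww (s : Finset F) (α : F) : F := (∏ β ∈ s.erase α, (α - β))⁻¹

noncomputable def ee (s : Finset F) (i : ℕ) : F := ∑ α ∈ s, α ^ i * ww s α

lemma leadingCoeff_basis (s : Finset F) (α : F) (hα : α ∈ s) :
    (Lagrange.basis s id α).coeff (s.card - 1) = ww s α := by
  have hinj : Set.InjOn (id : F → F) s := Function.injective_id.injOn
  have hdeg := Lagrange.natDegree_basis hinj hα
  have : (Lagrange.basis s id α).coeff (s.card - 1) = (Lagrange.basis s id α).leadingCoeff := by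
    rw [Polynomial.leadingCoeff, hdeg]
  rw [this, Lagrange.basis, leadingCoeff_prod]
  rw [ww, ← prod_inv_distrib]
  apply prod_congr rfl
  intro β hβ
  have hne : (α : F) ≠ β := by
    intro h; exact (mem_erase.1 hβ).1 h.symm
  rw [Lagrange.basisDivisor]
  rw [leadingCoeff_mul, leadingCoeff_C, leadingCoeff_X_sub_C, mul_one]; rfl

lemma ee_eq_coeff (s : Finset F) (i : ℕ) (hi : i < s.card) :
    ee s i = (X ^ i : F[X]).coeff (s.card - 1) := by
  have hinj : Set.InjOn (id : F → F) s := Function.injective_id.injOn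
  have hdeg : (X ^ i : F[X]).degree < s.card := by
    rw [degree_X_pow]; exact_mod_cast hi
  have h := Lagrange.eq_interpolate (f := (X ^ i : F[X])) hinj hdeg
  conv_rhs => rw [h]
  rw [Lagrange.interpolate_apply, finset_sum_coeff, ee]
  apply sum_congr rfl
  intro α hα
  rw [coeff_C_mul, leadingCoeff_basis s α hα, eval_pow, eval_X, id]

lemma ee_eq_zero (s : Finset F) (i : ℕ) (hi : i < s.card - 1) : ee s i = 0 := by
  rw [ee_eq_coeff s i (lt_of_lt_of_le hi (Nat.sub_le _ _)), coeff_X_pow,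
    if_neg (Nat.ne_of_lt hi).symm]

lemma ee_eq_one (s : Finset F) (hs : s.Nonempty) : ee s (s.card - 1) = 1 := by
  rw [ee_eq_coeff s _ (Nat.sub_lt (card_pos.2 hs) one_pos), coeff_X_pow, if_pos rfl]






noncomputable def TT (A B : Finset F) (n : ℕ) : F :=
  ∑ α ∈ A, ∑ β ∈ B, (α - β) * (α + β) ^ n * ww A α * ww B β

lemma TT_expand (A B : Finset F) (n : ℕ) :
    TT A B n = ∑ j ∈ Finset.range (n + 1),
      ((n.choose j : F) * (ee A (j+1) * ee B (n-j) - ee A j * ee B (n-j+1))) := by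
  have key : ∀ α β : F, (α - β) * (α + β) ^ n * ww A α * ww B β =
      ∑ j ∈ Finset.range (n + 1),
        ((n.choose j : F) * (α ^ (j+1) * ww A α * (β ^ (n-j) * ww B β)
          - α ^ j * ww A α * (β ^ (n-j+1) * ww B β))) := by
    intro α β
    rw [Commute.add_pow (Commute.all α β)]
    rw [Finset.mul_sum]
    simp_rw [Finset.sum_mul]
    apply Finset.sum_congr rfl
    intro j hj
    push_cast
    ring
  have eekey : ∀ j : ℕ, ee A (j+1) * ee B (n-j) - ee A j * ee B (n-j+1)
      = ∑ α ∈ A, ∑ β ∈ B, (α ^ (j+1) * ww A α * (β ^ (n-j) * ww B β)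
          - α ^ j * ww A α * (β ^ (n-j+1) * ww B β)) := by
    intro j
    rw [ee, ee, ee, ee, Finset.sum_mul_sum, Finset.sum_mul_sum, ← Finset.sum_sub_distrib]
    apply Finset.sum_congr rfl
    intro α _
    rw [← Finset.sum_sub_distrib]
  simp_rw [TT, key, eekey, Finset.mul_sum]
  trans ∑ α ∈ A, ∑ j ∈ Finset.range (n+1), ∑ β ∈ B,
      ((n.choose j : F) * (α ^ (j+1) * ww A α * (β ^ (n-j) * ww B β)
          - α ^ j * ww A α * (β ^ (n-j+1) * ww B β)))
  · exact Finset.sum_congr rfl fun α _ => Finset.sum_comm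
  · rw [Finset.sum_comm]


section
variable {A B : Finset F} {a b n : ℕ} (hA : A.card = a + 1) (hB : B.card = b + 1)

include hA hB

lemma prod_ee_eq_zero {i k : ℕ} (h : i < a ∨ k < b) : ee A i * ee B k = 0 := by
  rcases h with h | h
  · rw [ee_eq_zero A i (by omega), zero_mul]
  · rw [ee_eq_zero B k (by omega), mul_zero]

lemma prod_ee_eq_one : ee A a * ee B b = 1 := by
  have h1 : ee A a = 1 := by
    have := ee_eq_one A (card_pos.1 (by omega)); rwa [hA, Nat.add_sub_cancel] at this
  have h2 : ee B b = 1 := by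
    have := ee_eq_one B (card_pos.1 (by omega)); rwa [hB, Nat.add_sub_cancel] at this
  rw [h1, h2, mul_one]

lemma TT_low (hn : n + 1 < a + b) : TT A B n = 0 := by
  rw [TT_expand]
  apply Finset.sum_eq_zero
  intro j hj
  rw [mem_range] at hj
  have e1 : ee A (j+1) * ee B (n-j) = 0 := prod_ee_eq_zero hA hB (by omega)
  have e2 : ee A j * ee B (n-j+1) = 0 := prod_ee_eq_zero hA hB (by omega)
  rw [e1, e2, sub_zero, mul_zero]

lemma TT_top (ha : 1 ≤ a) (hn : n + 1 = a + b) :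
    TT A B n = (n.choose (a-1) : F) - (n.choose a : F) := by
  rw [TT_expand]
  have key : ∀ j ∈ Finset.range (n + 1),
      ((n.choose j : F) * (ee A (j+1) * ee B (n-j) - ee A j * ee B (n-j+1)))
      = (if j = a - 1 then (n.choose (a-1) : F) else 0)
        + (if j = a then -(n.choose a : F) else 0) := by
    intro j hj
    rw [mem_range] at hj
    rcases eq_or_ne j (a-1) with h | h
    · subst h
      have e1 : ee A (a-1+1) * ee B (n-(a-1)) = 1 := by
        have : a - 1 + 1 = a := by omega
        rw [this]
        have : n - (a-1) = b := by omega
        rw [this]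
        exact prod_ee_eq_one hA hB
      have e2 : ee A (a-1) * ee B (n-(a-1)+1) = 0 := prod_ee_eq_zero hA hB (by omega)
      rw [e1, e2, sub_zero, mul_one, if_pos rfl, if_neg (by omega), add_zero]
    · rcases eq_or_ne j a with h2 | h2
      · rw [h2]
        have hb : 1 ≤ b := by omega
        have e1 : ee A (a+1) * ee B (n-a) = 0 := prod_ee_eq_zero hA hB (by omega)
        have e2 : ee A a * ee B (n-a+1) = 1 := by
          have : n - a + 1 = b := by omega
          rw [this]; exact prod_ee_eq_one hA hB
        rw [e1, e2, zero_sub, if_neg (show a ≠ a - 1 by omega), if_pos rfl, zero_add,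
          mul_neg, mul_one]
      · have e1 : ee A (j+1) * ee B (n-j) = 0 := prod_ee_eq_zero hA hB (by omega)
        have e2 : ee A j * ee B (n-j+1) = 0 := prod_ee_eq_zero hA hB (by omega)
        rw [e1, e2, sub_zero, mul_zero, if_neg h, if_neg h2, add_zero]
  rw [Finset.sum_congr rfl key, Finset.sum_add_distrib, Finset.sum_ite_eq' (Finset.range (n+1)),
    Finset.sum_ite_eq' (Finset.range (n+1))]
  have h1 : a - 1 ∈ Finset.range (n+1) := mem_range.2 (by omega)
  rw [if_pos h1]
  by_cases h : a ∈ Finset.range (n+1)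
  · rw [if_pos h]; ring
  · rw [if_neg h]
    rw [mem_range] at h
    have : n.choose a = 0 := Nat.choose_eq_zero_of_lt (by omega)
    rw [this]
    push_cast; ring

end

noncomputable def UU (A B : Finset F) (n : ℕ) (D : List F) : F :=
  ∑ α ∈ A, ∑ β ∈ B,
    (α - β) * (α + β) ^ n * (D.map (fun c => α + β - c)).prod * ww A α * ww B β

section
variable {A B : Finset F} {a b : ℕ} (hA : A.card = a + 1) (hB : B.card = b + 1)

lemma UU_nil (n : ℕ) : UU A B n [] = TT A B n := by
  unfold UU TT
  simp

lemma UU_cons (n : ℕ) (c : F) (D : List F) :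
    UU A B n (c :: D) = UU A B (n+1) D - c * UU A B n D := by
  unfold UU
  rw [Finset.mul_sum, ← Finset.sum_sub_distrib]
  apply Finset.sum_congr rfl; intro α _
  rw [Finset.mul_sum, ← Finset.sum_sub_distrib]
  apply Finset.sum_congr rfl; intro β _
  rw [List.map_cons, List.prod_cons]
  ring

include hA hB

lemma UU_low {n : ℕ} {D : List F} (hn : n + D.length + 1 < a + b) : UU A B n D = 0 := by
  induction D generalizing n with
  | nil => rw [UU_nil, TT_low hA hB (by simpa using hn)]
  | cons c D ih =>
      rw [UU_cons, ih (by simp at hn ⊢; omega), ih (by simp at hn ⊢; omega), mul_zero, sub_zero]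

lemma UU_top (ha : 1 ≤ a) {n : ℕ} {D : List F} (hn : n + D.length + 1 = a + b) :
    UU A B n D = (((a+b-1).choose (a-1) : F)) - (((a+b-1).choose a : F)) := by
  induction D generalizing n with
  | nil =>
      rw [UU_nil, TT_top hA hB ha (by simpa using hn)]
      simp at hn
      rw [show n = a + b - 1 by omega]
  | cons c D ih =>
      rw [UU_cons, ih (by simp at hn ⊢; omega),
        UU_low hA hB (by simp at hn ⊢; omega), mul_zero, sub_zero]

end

section ZModPart

lemma anr (p : ℕ) (hp : p.Prime) (A B C : Finset (ZMod p))
    (hBne : B.Nonempty) (hcard : B.card < A.card) (hlt : A.card + B.card - 3 < p)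
    (hC : ∀ α ∈ A, ∀ β ∈ B, α ≠ β → α + β ∈ C) :
    A.card + B.card - 2 ≤ C.card := by
  haveI : Fact p.Prime := ⟨hp⟩
  classical
  by_contra hcon
  push_neg at hcon
  obtain ⟨b, hB⟩ : ∃ b, B.card = b + 1 := ⟨B.card - 1, by have := card_pos.2 hBne; omega⟩
  obtain ⟨a, hA⟩ : ∃ a, A.card = a + 1 := ⟨A.card - 1, by omega⟩
  have hab : b < a := by omega
  have ha : 1 ≤ a := by omega
  have hcc : C.card < a + b := by omega
  have hn : a + b - 1 < p := by omega
  set D : List (ZMod p) := C.toList ++ List.replicate (a + b - 1 - C.card) 0 with hD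
  have hlen : D.length = a + b - 1 := by
    simp [hD]
    omega
  have h0 : UU A B 0 D = 0 := by
    unfold UU
    apply Finset.sum_eq_zero; intro α hα
    apply Finset.sum_eq_zero; intro β hβ
    rcases eq_or_ne α β with rfl | hne
    · simp
    · have hmemC : α + β ∈ C := hC α hα β hβ hne
      have hmem : (0 : ZMod p) ∈ D.map (fun c => α + β - c) :=
        List.mem_map.2 ⟨α + β, by simp [hD, Finset.mem_toList, hmemC], sub_self _⟩
      rw [List.prod_eq_zero hmem]
      ring
  have htop := UU_top hA hB ha (n := 0) (D := D) (by rw [hlen]; omega)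
  rw [h0] at htop
  set n := a + b - 1 with hn'
  have heq : ((n.choose (a-1) : ZMod p)) = ((n.choose a : ZMod p)) := by
    have := htop.symm
    linear_combination this
  rcases Nat.eq_zero_or_pos b with hb0 | hb1
  · subst hb0
    rw [show n = a - 1 by omega, Nat.choose_self, Nat.choose_eq_zero_of_lt (by omega)] at heq
    simp at heq
  · have hle : a ≤ n := by omega
    have hid : n.choose a * a = n.choose (a-1) * b := by
      have := Nat.choose_succ_right_eq n (a - 1)
      rw [show a - 1 + 1 = a by omega] at this
      rw [this, show n - (a-1) = b by omega]
    have hz : (n.choose a : ZMod p) * ((a : ZMod p) - (b : ZMod p)) = 0 := by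
      have hcast : (n.choose a : ZMod p) * (a : ZMod p) = (n.choose (a-1) : ZMod p) * (b : ZMod p) := by
        exact_mod_cast congrArg (Nat.cast : ℕ → ZMod p) hid
      rw [heq] at hcast
      ring_nf
      ring_nf at hcast
      rw [hcast]
      ring
    have hne : ((a : ZMod p) - (b : ZMod p)) ≠ 0 := by
      intro h
      have : (a : ZMod p) = (b : ZMod p) := by linear_combination h
      rw [ZMod.natCast_eq_natCast_iff] at this
      have := Nat.ModEq.eq_of_lt_of_lt this (by omega) (by omega)
      omega
    have hc0 : (n.choose a : ZMod p) = 0 := by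
      rcases mul_eq_zero.1 hz with h | h
      · exact h
      · exact absurd h hne
    rw [ZMod.natCast_eq_zero_iff] at hc0
    have hdvd : p ∣ n.factorial := hc0.trans ⟨a.factorial * (n-a).factorial, by
      rw [← Nat.choose_mul_factorial_mul_factorial hle]; ring⟩
    exact absurd ((Nat.Prime.dvd_factorial hp).1 hdvd) (by omega)

theorem stmt_6 (p : ℕ) (hp : p.Prime) (A : Finset (ZMod p)) (hA : 2 ≤ A.card) :
    min p (2 * A.card - 3) ≤
      ({y : ZMod p | ∃ x₁ ∈ A, ∃ x₂ ∈ A, x₁ ≠ x₂ ∧ x₁ + x₂ = y}.ncard) := by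
  haveI : Fact p.Prime := ⟨hp⟩
  classical
  set S : Finset (ZMod p) :=
    ((A ×ˢ A).filter (fun q => q.1 ≠ q.2)).image (fun q => q.1 + q.2) with hS
  have hset : {y : ZMod p | ∃ x₁ ∈ A, ∃ x₂ ∈ A, x₁ ≠ x₂ ∧ x₁ + x₂ = y} = ↑S := by
    ext y
    simp only [hS, Set.mem_setOf_eq, coe_image, Set.mem_image, mem_coe, mem_filter, mem_product]
    constructor
    · rintro ⟨x₁, h₁, x₂, h₂, hne, hsum⟩
      exact ⟨(x₁, x₂), ⟨⟨h₁, h₂⟩, hne⟩, hsum⟩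
    · rintro ⟨⟨x₁, x₂⟩, ⟨⟨h₁, h₂⟩, hne⟩, hsum⟩
      exact ⟨x₁, h₁, x₂, h₂, hne, hsum⟩
  rw [hset, Set.ncard_coe_finset]
  have hmemS : ∀ α ∈ A, ∀ β ∈ A, α ≠ β → α + β ∈ S := by
    intro α hα β hβ hne
    exact mem_image.2 ⟨(α, β), mem_filter.2 ⟨mem_product.2 ⟨hα, hβ⟩, hne⟩, rfl⟩
  by_cases hcase : 2 * A.card ≤ p + 3
  · obtain ⟨x, hx⟩ := card_pos.1 (by omega : 0 < A.card)
    have hBc : (A.erase x).card = A.card - 1 := card_erase_of_mem hx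
    have hBne : (A.erase x).Nonempty := card_pos.1 (by omega)
    have key := anr p hp A (A.erase x) S hBne (by omega) (by omega)
      (fun α hα β hβ hne => hmemS α hα β (mem_of_mem_erase hβ) hne)
    calc min p (2 * A.card - 3) ≤ 2 * A.card - 3 := min_le_right _ _
      _ ≤ S.card := by omega
  · have hAp : A.card ≤ p := by
      have := card_le_card (subset_univ A)
      rwa [card_univ, ZMod.card] at this
    have hp5 : 4 ≤ p := by omega
    have htwo : (2 : ZMod p) ≠ 0 := by
      intro h
      have : (p : ℕ) ∣ 2 := by
        have := (ZMod.natCast_eq_zero_iff 2 p).1 (by exact_mod_cast h)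
        exact this
      have := Nat.le_of_dvd (by norm_num) this
      omega
    have huniv : ∀ y : ZMod p, y ∈ S := by
      intro y
      set B' : Finset (ZMod p) := A.image (fun z => y - z) with hB'
      have hB'c : B'.card = A.card := by
        rw [hB', card_image_of_injective _ (fun u v h => by
          have : y - u = y - v := h
          linear_combination -this)]
      have hinter : 2 ≤ (A ∩ B').card := by
        have h1 := card_inter_add_card_union A B'
        have h2 : (A ∪ B').card ≤ p := by
          have := card_le_card (subset_univ (A ∪ B'))
          rwa [card_univ, ZMod.card] at this
        omega
      obtain ⟨x₁, hx₁, x₂, hx₂, hne⟩ := one_lt_card.1 hinter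
      have hmem : ∀ z ∈ A ∩ B', z ∈ A ∧ y - z ∈ A := by
        intro z hz
        obtain ⟨hz1, hz2⟩ := mem_inter.1 hz
        obtain ⟨w, hw, hwz⟩ := mem_image.1 hz2
        refine ⟨hz1, ?_⟩
        have : y - z = w := by linear_combination hwz
        rwa [this]
      obtain ⟨hx₁A, hx₁B⟩ := hmem x₁ hx₁
      obtain ⟨hx₂A, hx₂B⟩ := hmem x₂ hx₂
      rcases eq_or_ne x₁ (y - x₁) with h1 | h1
      · rcases eq_or_ne x₂ (y - x₂) with h2 | h2
        · exfalso
          apply hne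
          have : (2 : ZMod p) * x₁ = 2 * x₂ := by linear_combination h1 - h2
          field_simp at this
          tauto
        · have := hmemS x₂ hx₂A (y - x₂) hx₂B h2
          rwa [add_sub_cancel] at this
      · have := hmemS x₁ hx₁A (y - x₁) hx₁B h1
        rwa [add_sub_cancel] at this
    have : S = univ := eq_univ_iff_forall.2 huniv
    rw [this, card_univ, ZMod.card]
    exact min_le_left _ _

end ZModPart
end

section
/- Let k ≥ 1, and let m, n be integers with m ≥ n ≥ 1. Write n = kq₀ + n₀ with q₀ ≥ 0 and 1 ≤ n₀ ≤ k. Then Σ_{i=1}^n min{ ⌊(m − j)/k⌋ : i ≤ j ≤ n, j ≡ i (mod k) } = (n(m−n) − {n}_k·{m−n}_k)/k + {m}_k·[{m}_k < {n}_k], where {a}_k is the least nonnegative residue of a mod k and [P] = 1 if P holds, 0 otherwise. -/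
/-! The minimum over `j` is attained at the largest admissible `j`, namely `n - (n - i) % k`, so the
`i`-th term is `(a + (n - i) % k) / k` with `a = m - n`. Reindexing by `t = n - i`, each term is
`a / k` plus a carry, which is `1` exactly when `a % k + t % k ≥ k`; counting the carries one period
at a time gives `n / k * (a % k) + (a % k + n % k - k)`, and the last summand is the wrap-around
term `m % k * [m % k < n % k]`. -/

open Finset

namespace Nat

lemma add_one_div_mod_of_mod_add_one_lt {k n : ℕ} (h : n % k + 1 < k) :
    (n + 1) / k = n / k ∧ (n + 1) % k = n % k + 1 :=
  (Nat.div_mod_unique (by omega)).2 ⟨by have := Nat.mod_add_div n k; omega, h⟩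

lemma add_one_div_mod_of_mod_add_one_eq {k n : ℕ} (h : n % k + 1 = k) :
    (n + 1) / k = n / k + 1 ∧ (n + 1) % k = 0 :=
  (Nat.div_mod_unique (by omega)).2 ⟨by have := Nat.mod_add_div n k; rw [mul_add]; omega, by omega⟩

lemma card_filter_le_mod_range {k : ℕ} (hk : 0 < k) (c n : ℕ) :
    #{t ∈ range n | c ≤ t % k} = n / k * (k - c) + (n % k - c) := by
  induction n with
  | zero => simp
  | succ n ih =>
    rw [card_filter, sum_range_succ, ← card_filter, ih]
    rcases (show n % k + 1 < k ∨ n % k + 1 = k by have := Nat.mod_lt n hk; omega) with h | h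
    · obtain ⟨hdiv, hmod⟩ := add_one_div_mod_of_mod_add_one_lt h
      rw [hdiv, hmod]
      split_ifs <;> omega
    · obtain ⟨hdiv, hmod⟩ := add_one_div_mod_of_mod_add_one_eq h
      rw [hdiv, hmod, add_mul]
      split_ifs <;> omega

lemma add_mod_div {k : ℕ} (hk : 0 < k) (a t : ℕ) :
    (a + t % k) / k = a / k + if k ≤ a % k + t % k then 1 else 0 := by
  rw [Nat.add_div hk, Nat.mod_mod, Nat.div_eq_of_lt (Nat.mod_lt t hk), add_zero]

lemma sum_range_add_mod_div {k : ℕ} (hk : 0 < k) (a n : ℕ) :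
    ∑ t ∈ range n, (a + t % k) / k = n * (a / k) + n / k * (a % k) + (a % k + n % k - k) := by
  have hcarry : ∀ t, k ≤ a % k + t % k ↔ k - a % k ≤ t % k := fun t => by omega
  have ha : a % k < k := Nat.mod_lt a hk
  simp only [add_mod_div hk, sum_add_distrib, sum_const, card_range, smul_eq_mul, sum_boole,
    hcarry, card_filter_le_mod_range hk, Nat.sub_sub_self ha.le, Nat.cast_id]
  omega

lemma mul_sub_mod_mul_mod_div {k : ℕ} (hk : 0 < k) (n a : ℕ) :
    (n * a - n % k * (a % k)) / k = n * (a / k) + n / k * (a % k) := by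
  have h : n * a = k * (n * (a / k) + n / k * (a % k)) + n % k * (a % k) := by
    have hn := Nat.div_add_mod n k
    have ha := Nat.div_add_mod a k
    set q := n / k
    set p := n % k
    set s := a / k
    set r := a % k
    rw [← hn, ← ha]
    ring
  rw [h, Nat.add_sub_cancel, Nat.mul_div_cancel_left _ hk]

lemma mod_add_mod_sub {k : ℕ} (hk : 0 < k) (a b : ℕ) :
    a % k + b % k - k = (a + b) % k * if (a + b) % k < b % k then 1 else 0 := by
  have := Nat.add_mod_add_ite a b k
  have := Nat.mod_lt a hk
  split_ifs at * <;> omega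

lemma le_sub_mod_of_dvd {k d x : ℕ} (hk : 0 < k) (hd : k ∣ d) (hdx : d ≤ x) : d ≤ x - x % k := by
  obtain ⟨t, rfl⟩ := hd
  have : t ≤ x / k := (Nat.le_div_iff_mul_le hk).2 (by linarith)
  have := Nat.mul_le_mul_left k this
  have := Nat.div_add_mod x k
  omega

end Nat

open Nat

lemma isLeast_sub_div_of_mod_eq {k : ℕ} (hk : 0 < k) {m n i : ℕ} (hin : i ≤ n) (hnm : n ≤ m) :
    IsLeast {c | ∃ j, i ≤ j ∧ j ≤ n ∧ j % k = i % k ∧ c = (m - j) / k}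
      ((m - n + (n - i) % k) / k) := by
  have hsplit := Nat.mod_add_div (n - i) k
  refine ⟨⟨i + k * ((n - i) / k), by omega, by omega, Nat.add_mul_mod_self_left _ _ _, ?_⟩, ?_⟩
  · congr 1; omega
  · rintro _ ⟨j, hij, hjn, hjmod, rfl⟩
    have hdvd : k ∣ j - i := (Nat.modEq_iff_dvd' hij).1 hjmod.symm
    have := le_sub_mod_of_dvd hk hdvd (Nat.sub_le_sub_right hjn i)
    exact Nat.div_le_div_right (by omega)

lemma sum_Icc_one_sub_eq_sum_range {M : Type*} [AddCommMonoid M] (f : ℕ → M) (n : ℕ) :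
    ∑ i ∈ Icc 1 n, f (n - i) = ∑ t ∈ range n, f t :=
  sum_nbij' (fun i => n - i) (fun t => n - t) (by simp; omega) (by simp; omega)
    (by simp; omega) (by simp; omega) (fun _ _ => rfl)

theorem stmt_11_general (k m n : ℕ) (hk : 1 ≤ k) (hmn : n ≤ m) :
    (∑ i ∈ Finset.Icc 1 n,
        sInf {c : ℕ | ∃ j, i ≤ j ∧ j ≤ n ∧ j % k = i % k ∧ c = (m - j) / k}) =
      (n * (m - n) - (n % k) * ((m - n) % k)) / k
        + (m % k) * (if m % k < n % k then 1 else 0) := by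
  have hmin : ∀ i ∈ Icc 1 n, sInf {c : ℕ | ∃ j, i ≤ j ∧ j ≤ n ∧ j % k = i % k ∧ c = (m - j) / k}
      = (m - n + (n - i) % k) / k :=
    fun i hi => (isLeast_sub_div_of_mod_eq hk (mem_Icc.1 hi).2 hmn).csInf_eq
  rw [sum_congr rfl hmin, sum_Icc_one_sub_eq_sum_range (fun t => (m - n + t % k) / k),
    sum_range_add_mod_div hk, mul_sub_mod_mul_mod_div hk, mod_add_mod_sub hk,
    Nat.sub_add_cancel hmn]

theorem stmt_11 (k m n q₀ n₀ : ℕ) (hk : 1 ≤ k) (hn : 1 ≤ n) (hmn : n ≤ m)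
    (hdecomp : n = k * q₀ + n₀) (hn₀1 : 1 ≤ n₀) (hn₀k : n₀ ≤ k) :
    (∑ i ∈ Finset.Icc 1 n,
        sInf {c : ℕ | ∃ j, i ≤ j ∧ j ≤ n ∧ j % k = i % k ∧ c = (m - j) / k}) =
      (n * (m - n) - (n % k) * ((m - n) % k)) / k
        + (m % k) * (if m % k < n % k then 1 else 0) :=
  stmt_11_general k m n hk hmn
end

section
/- Let n ≥ 1 and let q₁,…,qₙ be nonnegative integers with N = q₁ + ⋯ + qₙ. Then the coefficient of ∏_{j=1}^n x_j^{q_j + j − 1} in (x₁ + ⋯ + xₙ)^N · ∏_{1 ≤ i < j ≤ n}(x_j − x_i) equals N! · ∏_{0 ≤ i < j ≤ n−1} ((q_{j+1} + j) − (q_{i+1} + i)) / ∏_{j=0}^{n−1} (q_{j+1} + j)!. -/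
/-!
Write `λⱼ = q_{j+1} + j`. Expanding the Vandermonde product as the alternant
`∑_σ sgn σ ∏ⱼ xⱼ ^ σ(j)`, the coefficient becomes `∑_σ sgn σ · multinomial(λ - σ)`.
Multiplying by `∏ⱼ λⱼ!` turns each multinomial coefficient into `N! ∏ⱼ (λⱼ)_{σ(j)}`, with
falling factorials `(x)_k = x(x-1)⋯(x-k+1)`, which also account for the terms with some
`σ(j) > λⱼ` since they vanish there. Since `(x)_k` is a monic polynomial of degree `k` in `x`,
the alternant `∑_σ sgn σ ∏ⱼ (λⱼ)_{σ(j)}` is the Vandermonde determinant of the `λⱼ`.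
-/

open MvPolynomial Finset Equiv Equiv.Perm Nat

theorem Nat.multinomial_sub_mul_prod_factorial {ι : Type*} {s : Finset ι} {m k : ι → ℕ}
    (h : ∀ i ∈ s, k i ≤ m i) :
    multinomial s (fun i => m i - k i) * ∏ i ∈ s, (m i)! =
      (∑ i ∈ s, (m i - k i))! * ∏ i ∈ s, (m i).descFactorial (k i) := by
  rw [← multinomial_spec, prod_congr rfl fun i hi => (factorial_mul_descFactorial (h i hi)).symm,
    prod_mul_distrib]
  ring

theorem Matrix.det_eq_sum_sign_mul_prod_apply {ι R : Type*} [DecidableEq ι] [Fintype ι]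
    [CommRing R] (M : Matrix ι ι R) : M.det = ∑ σ : Perm ι, (sign σ : R) * ∏ i, M i (σ i) := by
  rw [← det_transpose, det_apply']
  rfl

theorem prod_filter_lt_eq_prod_range {M : Type*} [CommMonoid M] {n : ℕ} (f : ℕ → ℕ → M) :
    ∏ j : Fin n, ∏ i ∈ univ.filter (· < j), f j i = ∏ j ∈ range n, ∏ i ∈ range j, f j i := by
  rw [← Fin.prod_univ_eq_prod_range]
  refine prod_congr rfl fun j _ => ?_
  rw [filter_gt_eq_Iio, ← Nat.Iio_eq_range, ← Fin.map_valEmbedding_Iio, prod_map]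
  rfl

section Vandermonde

variable {R : Type*} [CommRing R] {n : ℕ}

theorem Matrix.det_vandermonde_eq_prod_filter_lt (v : Fin n → R) :
    (Matrix.vandermonde v).det = ∏ j, ∏ i ∈ univ.filter (· < j), (v j - v i) := by
  rw [det_vandermonde]
  exact prod_comm' fun i j => by simp

theorem prod_filter_lt_sub_eq_sum_sign_mul_prod_pow (v : Fin n → R) :
    ∏ j, ∏ i ∈ univ.filter (· < j), (v j - v i) =
      ∑ σ : Perm (Fin n), (sign σ : R) * ∏ j, v j ^ (σ j : ℕ) := by
  rw [← Matrix.det_vandermonde_eq_prod_filter_lt, Matrix.det_eq_sum_sign_mul_prod_apply]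
  rfl

theorem sum_sign_mul_prod_descFactorial [IsDomain R] (lam : Fin n → ℕ) :
    ∑ σ : Perm (Fin n), (sign σ : R) * ∏ j, ((lam j).descFactorial (σ j) : R) =
      ∏ j, ∏ i ∈ univ.filter (· < j), ((lam j : R) - lam i) := by
  rw [← Matrix.det_vandermonde_eq_prod_filter_lt,
    Matrix.det_eval_matrixOfPolynomials_eq_det_vandermonde _ (fun j => descPochhammer R j)
      (fun j => descPochhammer_natDegree R j) (fun j => monic_descPochhammer R j),
    Matrix.det_eq_sum_sign_mul_prod_apply]
  simp only [Matrix.of_apply, descPochhammer_eval_eq_descFactorial]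

end Vandermonde

theorem MvPolynomial.coeff_sum_X_pow_mul_monomial_mul_prod_factorial {R ι : Type*} [CommRing R]
    [Fintype ι] {m s : ι →₀ ℕ} {N : ℕ} (h : ∑ i, m i = N + ∑ i, s i) :
    coeff m ((∑ i, X i : MvPolynomial ι R) ^ N * monomial s 1) * ∏ i, ((m i)! : R) =
      N ! * ∏ i, ((m i).descFactorial (s i) : R) := by
  rw [coeff_mul_monomial']
  split_ifs with hsm
  · have hsub : ∑ i, (m i - s i) = N := by
      have := sum_tsub_distrib (s := univ) (f := m) (g := s) fun i _ => hsm i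
      omega
    rw [coeff_sum_X_pow_of_fintype, Finsupp.sum_fintype _ _ fun _ => rfl]
    simp only [Finsupp.coe_tsub, Pi.sub_apply, hsub, if_true, mul_one,
      Finsupp.multinomial_eq_of_support_subset (subset_univ _)]
    have key : multinomial univ (⇑m - ⇑s) * ∏ i, (m i)! = N ! * ∏ i, (m i).descFactorial (s i) := by
      rw [← hsub]
      exact multinomial_sub_mul_prod_factorial fun i _ => hsm i
    exact_mod_cast congrArg (Nat.cast : ℕ → R) key
  · obtain ⟨i, hi⟩ : ∃ i, m i < s i := by simpa [Finsupp.le_def] using hsm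
    rw [zero_mul, prod_eq_zero (mem_univ i) (by simp [descFactorial_eq_zero_iff_lt.mpr hi]),
      mul_zero]

theorem coeff_sum_X_pow_mul_prod_sub_mul_prod_factorial {n N : ℕ} (lam : Fin n → ℕ)
    (h : ∑ j, lam j = N + ∑ j : Fin n, (j : ℕ)) :
    coeff (Finsupp.equivFunOnFinite.symm lam)
        ((∑ j, X j : MvPolynomial (Fin n) ℤ) ^ N * ∏ j, ∏ i ∈ univ.filter (· < j), (X j - X i)) *
      ∏ j, ((lam j)! : ℤ) =
    N ! * ∏ j, ∏ i ∈ univ.filter (· < j), ((lam j : ℤ) - lam i) := by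
  rw [prod_filter_lt_sub_eq_sum_sign_mul_prod_pow, mul_sum, coeff_sum, sum_mul,
    ← sum_sign_mul_prod_descFactorial, mul_sum]
  refine sum_congr rfl fun σ _ => ?_
  have hmonomial : ∏ j, (X j : MvPolynomial (Fin n) ℤ) ^ (σ j : ℕ) =
      monomial (Finsupp.equivFunOnFinite.symm fun j => (σ j : ℕ)) 1 := by
    rw [monomial_eq, C_1, one_mul, Finsupp.prod_fintype _ _ fun _ => pow_zero _]
    rfl
  have key := coeff_sum_X_pow_mul_monomial_mul_prod_factorial (R := ℤ)
    (m := Finsupp.equivFunOnFinite.symm lam) (s := Finsupp.equivFunOnFinite.symm fun j => σ j)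
    (by simpa [Equiv.sum_comp] using h)
  simp only [Finsupp.coe_equivFunOnFinite_symm] at key
  rw [hmonomial, ← zsmul_eq_mul, mul_smul_comm, coeff_smul, smul_eq_mul, mul_assoc, key,
    Int.cast_id]
  ring

theorem stmt_17_general (n : ℕ) (q : ℕ → ℕ) (N : ℕ)
    (hN : N = ∑ i ∈ Finset.Icc 1 n, q i) :
    ((MvPolynomial.coeff
        (Finsupp.equivFunOnFinite.symm fun j : Fin n => q (j.1 + 1) + j.1)
        (((∑ j : Fin n, (X j : MvPolynomial (Fin n) ℤ)) ^ N) *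
          ∏ j : Fin n, ∏ i ∈ Finset.univ.filter (· < j), (X j - X i)) : ℤ) : ℚ) =
      (N.factorial : ℚ) *
        (∏ j ∈ Finset.range n, ∏ i ∈ Finset.range j,
            (((q (j + 1) + j : ℕ) : ℚ) - ((q (i + 1) + i : ℕ) : ℚ))) /
          ∏ j ∈ Finset.range n, ((q (j + 1) + j).factorial : ℚ) := by
  have hsum : ∑ j : Fin n, (q (j + 1) + j) = N + ∑ j : Fin n, (j : ℕ) := by
    rw [sum_add_distrib, hN, Fin.sum_univ_eq_sum_range (fun i => q (i + 1)), range_eq_Ico,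
      sum_Ico_add', zero_add, Ico_add_one_right_eq_Icc]
  rw [eq_div_iff (by positivity), ← prod_filter_lt_eq_prod_range, ← Fin.prod_univ_eq_prod_range]
  exact_mod_cast coeff_sum_X_pow_mul_prod_sub_mul_prod_factorial _ hsum

theorem stmt_17 (n : ℕ) (hn : 1 ≤ n) (q : ℕ → ℕ) (N : ℕ)
    (hN : N = ∑ i ∈ Finset.Icc 1 n, q i) :
    ((MvPolynomial.coeff
        (Finsupp.equivFunOnFinite.symm fun j : Fin n => q (j.1 + 1) + j.1)
        (((∑ j : Fin n, (X j : MvPolynomial (Fin n) ℤ)) ^ N) *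
          ∏ j : Fin n, ∏ i ∈ Finset.univ.filter (· < j), (X j - X i)) : ℤ) : ℚ) =
      (N.factorial : ℚ) *
        (∏ j ∈ Finset.range n, ∏ i ∈ Finset.range j,
            (((q (j + 1) + j : ℕ) : ℚ) - ((q (i + 1) + i : ℕ) : ℚ))) /
          ∏ j ∈ Finset.range n, ((q (j + 1) + j).factorial : ℚ) :=
  stmt_17_general n q N hN
end

section
/- Let F be a field, A₁,…,Aₙ finite subsets of F, and P ∈ F[x₁,…,xₙ] with deg P = k₁ + ⋯ + kₙ where 0 ≤ kᵢ < |Aᵢ| for each i. If the coefficient of x₁^{k₁}⋯xₙ^{kₙ} in P is nonzero, then there exist x₁ ∈ A₁, …, xₙ ∈ Aₙ with P(x₁,…,xₙ) ≠ 0. -/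
open Polynomial Finset

lemma key19 {F : Type*} [Field F] [DecidableEq F] (A : Finset F) (e : ℕ) (he : e < A.card) :
    ∑ a ∈ A, a ^ e * (∏ b ∈ A.erase a, (a - b))⁻¹
      = if e = A.card - 1 then 1 else 0 := by
  have hinj : Set.InjOn (id : F → F) A := fun x _ y _ h => h
  have hdeg : (X ^ e : F[X]).degree < A.card := by
    refine (degree_X_pow_le (R := F) e).trans_lt ?_
    exact_mod_cast Nat.cast_lt.mpr he
  have h := Lagrange.eq_interpolate (v := id) (s := A) hinj hdeg
  have hco := congrArg (fun p => Polynomial.coeff p (A.card - 1)) h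
  simp only [Lagrange.interpolate_apply, Polynomial.finset_sum_coeff] at hco
  have hb : ∀ a ∈ A, (Lagrange.basis A id a).coeff (A.card - 1)
      = (∏ b ∈ A.erase a, (a - b))⁻¹ := by
    intro a ha
    have hnd := Lagrange.natDegree_basis hinj ha
    have h1 : (Lagrange.basis A id a).coeff (A.card - 1)
        = (Lagrange.basis A id a).leadingCoeff := by
      rw [Polynomial.leadingCoeff, hnd]
    rw [h1, Lagrange.basis, Polynomial.leadingCoeff_prod]
    rw [← Finset.prod_inv_distrib]
    refine Finset.prod_congr rfl fun b hb => ?_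
    have hab : (a : F) ≠ b := by
      rcases Finset.mem_erase.mp hb with ⟨hne, _⟩
      exact fun h => hne (h.symm)
    rw [Lagrange.basisDivisor]
    simp [Polynomial.leadingCoeff_mul, hab, sub_ne_zero.mpr hab]
  rw [Polynomial.coeff_X_pow] at hco
  have h2 : ∀ a ∈ A, (C ((X ^ e : F[X]).eval (id a)) * Lagrange.basis A id a).coeff (A.card - 1)
      = a ^ e * (∏ b ∈ A.erase a, (a - b))⁻¹ := by
    intro a ha
    rw [Polynomial.coeff_C_mul, hb a ha]; simp
  rw [Finset.sum_congr rfl h2] at hco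
  rw [← hco]
  by_cases h' : e = A.card - 1 <;> simp [h', eq_comm]

lemma grid19 {F : Type*} [Field F] [DecidableEq F] (n : ℕ) (A : Fin n → Finset F)
    (P : MvPolynomial (Fin n) F)
    (hdeg : P.totalDegree ≤ ∑ i, ((A i).card - 1))
    (hA : ∀ i, (A i).Nonempty) :
    ∑ a ∈ Fintype.piFinset A,
        (∏ i, (∏ b ∈ (A i).erase (a i), (a i - b))⁻¹) * MvPolynomial.eval a P
      = P.coeff (Finsupp.equivFunOnFinite.symm (fun i => (A i).card - 1)) := by
  set t : (Fin n) →₀ ℕ := Finsupp.equivFunOnFinite.symm (fun i => (A i).card - 1) with ht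
  simp only [MvPolynomial.eval_eq', Finset.mul_sum]
  rw [Finset.sum_comm]
  have hstep : ∀ m ∈ P.support,
      ∑ a ∈ Fintype.piFinset A,
        (∏ i, (∏ b ∈ (A i).erase (a i), (a i - b))⁻¹) * (P.coeff m * ∏ i, a i ^ m i)
      = P.coeff m * (if m = t then 1 else 0) := by
    intro m hm
    have hsum : ∀ a : Fin n → F,
        (∏ i, (∏ b ∈ (A i).erase (a i), (a i - b))⁻¹) * (P.coeff m * ∏ i, a i ^ m i)
        = P.coeff m * ∏ i, (a i ^ m i * (∏ b ∈ (A i).erase (a i), (a i - b))⁻¹) := by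
      intro a; rw [Finset.prod_mul_distrib]; ring
    rw [Finset.sum_congr rfl fun a _ => hsum a, ← Finset.mul_sum,
      ← Finset.prod_univ_sum (t := A)
        (f := fun i y => y ^ m i * (∏ b ∈ (A i).erase y, (y - b))⁻¹)]
    congr 1
    have hmle : ∑ i, m i ≤ ∑ i, ((A i).card - 1) := by
      refine le_trans ?_ hdeg
      have := MvPolynomial.le_totalDegree hm
      rwa [Finsupp.sum_fintype _ _ (fun _ => rfl)] at this
    have hteq : (m = t) ↔ ∀ i, m i = (A i).card - 1 := by
      constructor
      · intro h i; rw [h, ht]; simp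
      · intro h; ext i; rw [h i, ht]; simp
    by_cases hall : ∀ i, m i = (A i).card - 1
    · rw [if_pos (hteq.mpr hall)]
      refine Finset.prod_eq_one fun i _ => ?_
      rw [key19 (A i) (m i) (by rw [hall i]; exact Nat.sub_lt (hA i).card_pos one_pos),
        if_pos (hall i)]
    · rw [if_neg (fun h => hall (hteq.mp h))]
      have hj : ∃ j, m j < (A j).card - 1 := by
        by_contra hno
        push_neg at hno
        have heq : ∀ i ∈ Finset.univ, ((A i).card - 1) = m i := by
          rw [← Finset.sum_eq_sum_iff_of_le (fun i _ => hno i)]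
          exact le_antisymm (Finset.sum_le_sum fun i _ => hno i) hmle
        exact hall fun i => (heq i (Finset.mem_univ i)).symm
      obtain ⟨j, hj⟩ := hj
      refine Finset.prod_eq_zero (Finset.mem_univ j) ?_
      rw [key19 (A j) (m j) (hj.trans_le (Nat.sub_le _ _)), if_neg hj.ne]
  rw [Finset.sum_congr rfl hstep]
  simp only [mul_ite, mul_one, mul_zero]
  rw [Finset.sum_ite_eq' P.support t (fun m => P.coeff m)]
  by_cases h : t ∈ P.support
  · rw [if_pos h]
  · rw [if_neg h]
    exact (MvPolynomial.notMem_support_iff.mp h).symm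

theorem stmt_19 {F : Type*} [Field F] (n : ℕ) (A : Fin n → Finset F)
    (P : MvPolynomial (Fin n) F) (d : Fin n → ℕ)
    (hdeg : P.totalDegree = ∑ i, d i)
    (hlt : ∀ i, d i < (A i).card)
    (hcoeff : P.coeff (Finsupp.equivFunOnFinite.symm d) ≠ 0) :
    ∃ x : Fin n → F, (∀ i, x i ∈ A i) ∧ MvPolynomial.eval x P ≠ 0 := by
  classical
  have hB : ∀ i, ∃ B : Finset F, B ⊆ A i ∧ B.card = d i + 1 := fun i =>
    Finset.exists_subset_card_eq (hlt i)
  choose B hBsub hBcard using hB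
  have hcard : ∀ i, (B i).card - 1 = d i := fun i => by rw [hBcard i]; simp
  have hsum := grid19 n B P
    (by rw [hdeg]; exact le_of_eq (Finset.sum_congr rfl fun i _ => (hcard i).symm))
    (fun i => Finset.card_pos.mp (by rw [hBcard i]; exact Nat.succ_pos _))
  have hne : ∑ a ∈ Fintype.piFinset B,
      (∏ i, (∏ b ∈ (B i).erase (a i), (a i - b))⁻¹) * MvPolynomial.eval a P ≠ 0 := by
    rw [hsum]
    have : (fun i => (B i).card - 1) = d := funext hcard
    rw [this]
    exact hcoeff
  obtain ⟨a, ha, hav⟩ := Finset.exists_ne_zero_of_sum_ne_zero hne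
  refine ⟨a, fun i => hBsub i (Fintype.mem_piFinset.mp ha i), fun h => hav ?_⟩
  rw [h, mul_zero]
end
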